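/- arXiv:2509.26399 — 2 statements merged into one kernel-verified Lean document; each statement's English description precedes it below -/
import Mathlib

section
/- Let f : E → ℝ be differentiable, convex, and L-smooth (L > 0) on a real inner product space E, let x* be a global minimizer of f, and let 0 < η ≤ 1/L. Then for every x in E: ‖(x − η·∇f(x)) − x*‖² ≤ ‖x − x*‖² − (η/L)·‖∇f(x)‖². -/
/-! Along a segment, `f` restricts to a convex function of one variable whose derivative grows at
most linearly, which gives the first-order convexity inequality and the descent lemma
`f y ≤ f x + ⟪∇f x, y - x⟫ + L/2 ‖y - x‖²`. Comparing both at the point `y - (∇f y - ∇f x)/L`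
yields cocoercivity `‖∇f x - ∇f y‖² / L ≤ ⟪∇f x - ∇f y, x - y⟫`. Since `∇f x* = 0`, expanding
`‖x - η∇f x - x*‖²` and using `η² ≤ η/L` gives the contraction. -/

open AffineMap
open scoped RealInnerProductSpace

lemma le_add_deriv_add_of_deriv_le_add_mul {φ φ' : ℝ → ℝ} {C : ℝ}
    (hφ : ∀ t, HasDerivAt φ (φ' t) t) (hφ' : ∀ t ∈ Set.Ico (0 : ℝ) 1, φ' t ≤ φ' 0 + C * t) :
    φ 1 ≤ φ 0 + φ' 0 + C / 2 := by
  have hB (t : ℝ) : HasDerivAt (fun s => φ 0 + φ' 0 * s + C / 2 * s ^ 2) (φ' 0 + C * t) t := by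
    have h := (((hasDerivAt_id' t).const_mul (φ' 0)).const_add (φ 0)).fun_add
      ((hasDerivAt_pow 2 t).const_mul (C / 2))
    exact h.congr_deriv (by push_cast; ring)
  have := image_le_of_deriv_right_le_deriv_boundary (a := 0) (b := 1)
    (fun t _ => (hφ t).continuousAt.continuousWithinAt) (fun t _ => (hφ t).hasDerivWithinAt)
    (by simp) (fun t _ => (hB t).continuousAt.continuousWithinAt)
    (fun t _ => (hB t).hasDerivWithinAt) hφ' (Set.right_mem_Icc.mpr zero_le_one)
  simpa using this

section

variable {E : Type*} [NormedAddCommGroup E] [InnerProductSpace ℝ E] [CompleteSpace E]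
  {f : E → ℝ} {a b : E}

lemma HasGradientAt.hasDerivAt_comp_lineMap {g : E} {t : ℝ}
    (hf : HasGradientAt f g (lineMap a b t)) :
    HasDerivAt (fun s : ℝ => f (lineMap a b s)) ⟪g, b - a⟫ t := by
  have := (hasGradientAt_iff_hasFDerivAt.mp hf).comp_hasDerivAt t hasDerivAt_lineMap
  rwa [InnerProductSpace.toDual_apply_apply] at this

lemma ConvexOn.add_inner_gradient_le (hconv : ConvexOn ℝ Set.univ f) (hf : Differentiable ℝ f)
    (a b : E) :
    f a + ⟪gradient f a, b - a⟫ ≤ f b := by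
  have hline : ConvexOn ℝ Set.univ (fun s : ℝ => f (lineMap a b s)) :=
    hconv.comp_affineMap (lineMap a b : ℝ →ᵃ[ℝ] E)
  have hderiv : HasDerivAt (fun s : ℝ => f (lineMap a b s)) ⟪gradient f a, b - a⟫ 0 :=
    HasGradientAt.hasDerivAt_comp_lineMap (by simpa using (hf a).hasGradientAt)
  have := hline.le_slope_of_hasDerivAt (Set.mem_univ 0) (Set.mem_univ 1) zero_lt_one hderiv
  simp only [slope_def_field, lineMap_apply_zero, lineMap_apply_one, sub_zero, div_one] at this
  linarith

variable {L : ℝ}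

lemma le_add_inner_gradient_add_of_lipschitz_gradient (hf : Differentiable ℝ f)
    (hsmooth : ∀ x y : E, ‖gradient f x - gradient f y‖ ≤ L * ‖x - y‖) (a b : E) :
    f b ≤ f a + ⟪gradient f a, b - a⟫ + L / 2 * ‖b - a‖ ^ 2 := by
  have hderiv (t : ℝ) :
      HasDerivAt (fun s : ℝ => f (lineMap a b s)) ⟪gradient f (lineMap a b t), b - a⟫ t :=
    (hf _).hasGradientAt.hasDerivAt_comp_lineMap
  have hbound (t : ℝ) (ht : t ∈ Set.Ico (0 : ℝ) 1) :
      ⟪gradient f (lineMap a b t), b - a⟫ ≤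
        ⟪gradient f (lineMap a b (0 : ℝ)), b - a⟫ + L * ‖b - a‖ ^ 2 * t := by
    have hdist : ‖lineMap a b t - a‖ = t * ‖b - a‖ := by
      rw [← vsub_eq_sub, lineMap_vsub_left, norm_smul, Real.norm_of_nonneg ht.1, vsub_eq_sub]
    calc ⟪gradient f (lineMap a b t), b - a⟫
        = ⟪gradient f a, b - a⟫ + ⟪gradient f (lineMap a b t) - gradient f a, b - a⟫ := by
          rw [inner_sub_left]; ring
      _ ≤ ⟪gradient f a, b - a⟫ + ‖gradient f (lineMap a b t) - gradient f a‖ * ‖b - a‖ := by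
          gcongr; exact real_inner_le_norm _ _
      _ ≤ ⟪gradient f a, b - a⟫ + L * (t * ‖b - a‖) * ‖b - a‖ := by
          gcongr; exact hdist ▸ hsmooth _ _
      _ = ⟪gradient f (lineMap a b (0 : ℝ)), b - a⟫ + L * ‖b - a‖ ^ 2 * t := by
          rw [lineMap_apply_zero]; ring
  have := le_add_deriv_add_of_deriv_le_add_mul hderiv hbound
  simp only [lineMap_apply_zero, lineMap_apply_one] at this
  linarith

lemma ConvexOn.add_inner_gradient_add_sq_norm_le (hL : 0 < L) (hconv : ConvexOn ℝ Set.univ f)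
    (hf : Differentiable ℝ f) (hsmooth : ∀ x y : E, ‖gradient f x - gradient f y‖ ≤ L * ‖x - y‖)
    (a b : E) :
    f a + ⟪gradient f a, b - a⟫ + 1 / (2 * L) * ‖gradient f b - gradient f a‖ ^ 2 ≤ f b := by
  set d := gradient f b - gradient f a
  have hconv_z := hconv.add_inner_gradient_le hf a (b - (1 / L) • d)
  have hdescent_z :=
    le_add_inner_gradient_add_of_lipschitz_gradient hf hsmooth b (b - (1 / L) • d)
  have hza : b - (1 / L) • d - a = (b - a) - (1 / L) • d := by abel
  have hzb : b - (1 / L) • d - b = -((1 / L) • d) := by abel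
  have hd : 1 / L * ⟪gradient f b, d⟫ - 1 / L * ⟪gradient f a, d⟫ = 1 / L * ‖d‖ ^ 2 := by
    rw [← mul_sub, ← inner_sub_left, real_inner_self_eq_norm_sq]
  rw [hza, inner_sub_right, real_inner_smul_right] at hconv_z
  rw [hzb, inner_neg_right, real_inner_smul_right, norm_neg, norm_smul,
    Real.norm_of_nonneg (one_div_pos.mpr hL).le] at hdescent_z
  have hL2 : L / 2 * (1 / L * ‖d‖) ^ 2 = 1 / (2 * L) * ‖d‖ ^ 2 := by field_simp
  have hL1 : 1 / L * ‖d‖ ^ 2 = 2 * (1 / (2 * L) * ‖d‖ ^ 2) := by field_simp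
  linarith

lemma ConvexOn.gradient_cocoercive (hL : 0 < L) (hconv : ConvexOn ℝ Set.univ f)
    (hf : Differentiable ℝ f) (hsmooth : ∀ x y : E, ‖gradient f x - gradient f y‖ ≤ L * ‖x - y‖)
    (x y : E) :
    1 / L * ‖gradient f x - gradient f y‖ ^ 2 ≤ ⟪gradient f x - gradient f y, x - y⟫ := by
  have hxy := hconv.add_inner_gradient_add_sq_norm_le hL hf hsmooth x y
  have hyx := hconv.add_inner_gradient_add_sq_norm_le hL hf hsmooth y x
  rw [norm_sub_rev] at hxy
  have hinner : ⟪gradient f x - gradient f y, x - y⟫ =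
      -⟪gradient f x, y - x⟫ - ⟪gradient f y, x - y⟫ := by
    rw [inner_sub_left, ← inner_neg_right, neg_sub]
  have hL1 : 1 / L = 2 * (1 / (2 * L)) := by field_simp
  rw [hinner, hL1]
  linarith

end

/-- One-step gradient descent contraction toward a global minimizer for a differentiable,
convex, `L`-smooth function, with stepsize `0 < η ≤ 1/L`. -/
theorem gradient_descent_one_step_contraction
    {E : Type*} [NormedAddCommGroup E] [InnerProductSpace ℝ E] [CompleteSpace E]
    (f : E → ℝ) (L : ℝ) (hL : 0 < L)
    (hdiff : Differentiable ℝ f)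
    (hconv : ConvexOn ℝ Set.univ f)
    (hsmooth : ∀ x y : E, ‖gradient f x - gradient f y‖ ≤ L * ‖x - y‖)
    (xstar : E) (hmin : ∀ x : E, f xstar ≤ f x)
    (η : ℝ) (hη0 : 0 < η) (hη : η ≤ 1 / L) (x : E) :
    ‖(x - η • gradient f x) - xstar‖ ^ 2 ≤
      ‖x - xstar‖ ^ 2 - (η / L) * ‖gradient f x‖ ^ 2 := by
  have hgrad_min : gradient f xstar = 0 := by
    have hfderiv := ((isMinOn_univ_iff.mpr hmin).isLocalMin Filter.univ_mem).fderiv_eq_zero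
    simp [gradient, hfderiv]
  have hcoco := hconv.gradient_cocoercive hL hdiff hsmooth x xstar
  rw [hgrad_min, sub_zero] at hcoco
  have hexpand : ‖(x - η • gradient f x) - xstar‖ ^ 2 =
      ‖x - xstar‖ ^ 2 - 2 * η * ⟪gradient f x, x - xstar⟫ + η ^ 2 * ‖gradient f x‖ ^ 2 := by
    rw [sub_right_comm, norm_sub_sq_real, real_inner_smul_right, norm_smul,
      Real.norm_of_nonneg hη0.le, real_inner_comm]
    ring
  have hη_sq : η ^ 2 ≤ η * (1 / L) := by
    rw [sq]; exact mul_le_mul_of_nonneg_left hη hη0.le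
  rw [hexpand, div_eq_mul_one_div η L]
  nlinarith [mul_le_mul_of_nonneg_right hη_sq (sq_nonneg ‖gradient f x‖),
    mul_le_mul_of_nonneg_left hcoco hη0.le]
end

section
/- Suppose each local objective L_u (u = 1, …, U) is differentiable, convex, and L-smooth; let L = (1/U)·∑_{u=1}^U L_u, let W* be a global minimizer of L, and let σ*² ≥ 0 satisfy (1/U)·∑_{u=1}^U ‖∇L_u(W*)‖² ≤ σ*². Let each client run E steps of local gradient descent with stepsize η > 0 from the common starting point W. Then (1/U)·∑_{u=1}^U ∑_{e=0}^{E−1} ‖∇L_u(W_u^(e))‖² ≤ (3L²/U)·∑_{u=1}^U ∑_{e=0}^{E−1} ‖W_u^(e) − W‖² + 6·E·L·(L(W) − L(W*)) + 3·E·σ*². -/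
/-! The estimate is pointwise: for every client `u` and every point `z`, split
`∇L_u z = (∇L_u z - ∇L_u W) + (∇L_u W - ∇L_u W*) + ∇L_u W*` and use
`‖a + b + c‖² ≤ 3 (‖a‖² + ‖b‖² + ‖c‖²)`. The first term is controlled by smoothness, the third
by the heterogeneity bound, and the second by co-coercivity of the gradient of a convex
`L`-smooth function, `‖∇f x - ∇f y‖² ≤ 2L (f x - f y - ⟪∇f y, x - y⟫)`. Averaging over the
clients, the linear terms `⟪∇L_u W*, W - W*⟫` cancel because `∇L(W*) = 0`, leaving
`L(W) - L(W*)`. -/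

open scoped RealInnerProductSpace BigOperators

theorem norm_add₃_sq_le {F : Type*} [SeminormedAddCommGroup F] (a b c : F) :
    ‖a + b + c‖ ^ 2 ≤ 3 * (‖a‖ ^ 2 + ‖b‖ ^ 2 + ‖c‖ ^ 2) := by
  have h := pow_le_pow_left₀ (norm_nonneg _) (norm_add₃_le (a := a) (b := b) (c := c)) 2
  nlinarith [sq_nonneg (‖a‖ - ‖b‖), sq_nonneg (‖a‖ - ‖c‖), sq_nonneg (‖b‖ - ‖c‖)]

section Gradient

variable {E : Type*} [NormedAddCommGroup E] [InnerProductSpace ℝ E] [CompleteSpace E]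

theorem HasGradientAt.sum {ι : Type*} (s : Finset ι) {f : ι → E → ℝ} {g : ι → E} {x : E}
    (h : ∀ i ∈ s, HasGradientAt (f i) (g i) x) :
    HasGradientAt (fun y => ∑ i ∈ s, f i y) (∑ i ∈ s, g i) x := by
  rw [hasGradientAt_iff_hasFDerivAt, map_sum]
  exact HasFDerivAt.fun_sum fun i hi => hasGradientAt_iff_hasFDerivAt.mp (h i hi)

variable {f : E → ℝ}

theorem HasGradientAt.const_mul {g x : E} (h : HasGradientAt f g x) (c : ℝ) :
    HasGradientAt (fun y => c * f y) (c • g) x := by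
  rw [hasGradientAt_iff_hasFDerivAt, map_smul]
  exact (hasGradientAt_iff_hasFDerivAt.mp h).const_mul c

theorem HasGradientAt.sub_inner {g x : E} (h : HasGradientAt f g x) (a : E) :
    HasGradientAt (fun y => f y - ⟪a, y⟫) (g - a) x := by
  rw [hasGradientAt_iff_hasFDerivAt, map_sub]
  exact (hasGradientAt_iff_hasFDerivAt.mp h).sub (InnerProductSpace.toDual ℝ E a).hasFDerivAt

theorem IsLocalMin.hasGradientAt_eq_zero {g x : E} (h : IsLocalMin f x)
    (hf : HasGradientAt f g x) : g = 0 := by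
  simpa using h.hasFDerivAt_eq_zero (hasGradientAt_iff_hasFDerivAt.mp hf)

theorem HasGradientAt.hasDerivAt_comp_add_smul {g x v : E} {t : ℝ}
    (hf : HasGradientAt f g (x + t • v)) :
    HasDerivAt (fun s : ℝ => f (x + s • v)) ⟪g, v⟫ t := by
  have hline : HasDerivAt (fun s : ℝ => x + s • v) v t := by
    simpa using ((hasDerivAt_id t).smul_const v).const_add x
  have := (hasGradientAt_iff_hasFDerivAt.mp hf).comp_hasDerivAt t hline
  rwa [InnerProductSpace.toDual_apply_apply] at this

theorem ConvexOn.add_inner_le_of_hasGradientAt {g x : E}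
    (hconv : ConvexOn ℝ Set.univ f) (hf : HasGradientAt f g x) (y : E) :
    f x + ⟪g, y - x⟫ ≤ f y := by
  have hline : ConvexOn ℝ Set.univ (fun t : ℝ => f (x + t • (y - x))) := by
    have := hconv.comp_affineMap (AffineMap.lineMap x y)
    simpa [Function.comp_def, AffineMap.lineMap_apply_module', add_comm] using this
  have hd : HasDerivAt (fun t : ℝ => f (x + t • (y - x))) ⟪g, y - x⟫ 0 :=
    HasGradientAt.hasDerivAt_comp_add_smul (by simpa using hf)
  have := hline.le_slope_of_hasDerivAt (Set.mem_univ 0) (Set.mem_univ 1) zero_lt_one hd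
  simp only [slope_def_field, one_smul, add_sub_cancel, zero_smul, add_zero, sub_zero, div_one]
    at this
  linarith

variable {f' : E → E} {L : ℝ}

theorem le_add_inner_add_sq_of_lipschitz_gradient (hf : ∀ z, HasGradientAt f (f' z) z)
    (hlip : ∀ a b, ‖f' a - f' b‖ ≤ L * ‖a - b‖) (x y : E) :
    f y ≤ f x + ⟪f' x, y - x⟫ + L / 2 * ‖y - x‖ ^ 2 := by
  set v := y - x
  set φ : ℝ → ℝ := fun t => f (x + t • v) - t * ⟪f' x, v⟫ - L / 2 * t ^ 2 * ‖v‖ ^ 2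
  have hφ : ∀ t, HasDerivAt φ (⟪f' (x + t • v) - f' x, v⟫ - L * t * ‖v‖ ^ 2) t := by
    intro t
    have hsq : HasDerivAt (fun s : ℝ => L / 2 * s ^ 2 * ‖v‖ ^ 2) (L * t * ‖v‖ ^ 2) t := by
      refine (((hasDerivAt_pow 2 t).const_mul (L / 2)).mul_const (‖v‖ ^ 2)).congr_deriv ?_
      ring
    rw [inner_sub_left]
    exact (((hf _).hasDerivAt_comp_add_smul).sub (hasDerivAt_mul_const _)).sub hsq
  have hanti : AntitoneOn φ (Set.Ici 0) := by
    refine antitoneOn_of_hasDerivWithinAt_nonpos (convex_Ici 0)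
      (fun t _ => (hφ t).continuousAt.continuousWithinAt) (fun t _ => (hφ t).hasDerivWithinAt)
      fun t ht => ?_
    rw [interior_Ici, Set.mem_Ioi] at ht
    have := calc ⟪f' (x + t • v) - f' x, v⟫ ≤ ‖f' (x + t • v) - f' x‖ * ‖v‖ :=
          real_inner_le_norm _ _
      _ ≤ L * ‖(x + t • v) - x‖ * ‖v‖ := by gcongr; exact hlip _ _
      _ = L * t * ‖v‖ ^ 2 := by
          rw [add_sub_cancel_left, norm_smul, Real.norm_of_nonneg ht.le]; ring
    linarith
  have h01 := hanti Set.self_mem_Ici (Set.mem_Ici.mpr zero_le_one) zero_le_one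
  simp only [φ, one_smul, zero_smul, add_zero, v, add_sub_cancel] at h01
  linarith

theorem sq_norm_le_two_mul_sub_of_lipschitz_gradient (hf : ∀ z, HasGradientAt f (f' z) z)
    (hL : 0 < L) (hlip : ∀ a b, ‖f' a - f' b‖ ≤ L * ‖a - b‖) {y : E} (hmin : ∀ z, f y ≤ f z)
    (x : E) : ‖f' x‖ ^ 2 ≤ 2 * L * (f x - f y) := by
  -- one gradient step of length `1 / L` from `x` decreases `f` by `‖f' x‖² / (2L)`
  have hstep := le_add_inner_add_sq_of_lipschitz_gradient hf hlip x (x - L⁻¹ • f' x)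
  rw [sub_sub_cancel_left, inner_neg_right, real_inner_smul_right, real_inner_self_eq_norm_sq,
    norm_neg, norm_smul, Real.norm_of_nonneg (inv_nonneg.mpr hL.le)] at hstep
  have := hmin (x - L⁻¹ • f' x)
  have hgap : L * (L⁻¹ * ‖f' x‖ ^ 2) - L ^ 2 / 2 * (L⁻¹ * ‖f' x‖) ^ 2 = ‖f' x‖ ^ 2 / 2 := by
    field_simp; ring
  nlinarith

theorem ConvexOn.sq_norm_sub_le_of_lipschitz_gradient (hconv : ConvexOn ℝ Set.univ f)
    (hf : ∀ z, HasGradientAt f (f' z) z) (hL : 0 < L)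
    (hlip : ∀ a b, ‖f' a - f' b‖ ≤ L * ‖a - b‖) (x y : E) :
    ‖f' x - f' y‖ ^ 2 ≤ 2 * L * (f x - f y - ⟪f' y, x - y⟫) := by
  -- tilting `f` by the linear map `⟪f' y, ·⟫` makes `y` a global minimizer
  set h : E → ℝ := fun z => f z - ⟪f' y, z⟫
  have hh : ∀ z, HasGradientAt h (f' z - f' y) z := fun z => (hf z).sub_inner (f' y)
  have hhconv : ConvexOn ℝ Set.univ h :=
    hconv.sub ((innerₛₗ ℝ (f' y)).concaveOn convex_univ)
  have hmin : ∀ z, h y ≤ h z := fun z => by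
    simpa using hhconv.add_inner_le_of_hasGradientAt (hh y) z
  have hhlip : ∀ a b, ‖(f' a - f' y) - (f' b - f' y)‖ ≤ L * ‖a - b‖ := fun a b => by
    simpa using hlip a b
  have := sq_norm_le_two_mul_sub_of_lipschitz_gradient hh hL hhlip hmin x
  convert this using 2
  simp only [h, inner_sub_right]
  ring

theorem ConvexOn.sq_norm_le_of_lipschitz_gradient (hconv : ConvexOn ℝ Set.univ f)
    (hf : ∀ z, HasGradientAt f (f' z) z) (hL : 0 < L)
    (hlip : ∀ a b, ‖f' a - f' b‖ ≤ L * ‖a - b‖) (z w w' : E) :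
    ‖f' z‖ ^ 2 ≤ 3 * L ^ 2 * ‖z - w‖ ^ 2 + 6 * L * (f w - f w' - ⟪f' w', w - w'⟫) +
      3 * ‖f' w'‖ ^ 2 := by
  have hsplit := norm_add₃_sq_le (f' z - f' w) (f' w - f' w') (f' w')
  rw [sub_add_sub_cancel, sub_add_cancel] at hsplit
  have hnear : ‖f' z - f' w‖ ^ 2 ≤ L ^ 2 * ‖z - w‖ ^ 2 := by
    rw [← mul_pow]; exact pow_le_pow_left₀ (norm_nonneg _) (hlip z w) 2
  have hfar := hconv.sq_norm_sub_le_of_lipschitz_gradient hf hL hlip w w'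
  linarith

end Gradient

theorem client_aggregate_gradient_bound_general
    {E : Type*} [NormedAddCommGroup E] [InnerProductSpace ℝ E] [CompleteSpace E]
    (U : ℕ) (Lf : Fin U → E → ℝ) (L : ℝ) (hL : 0 < L)
    (hdiff : ∀ u, Differentiable ℝ (Lf u))
    (hconv : ∀ u, ConvexOn ℝ Set.univ (Lf u))
    (hsmooth : ∀ u, ∀ x y : E, ‖gradient (Lf u) x - gradient (Lf u) y‖ ≤ L * ‖x - y‖)
    (Lg : E → ℝ) (hLg : ∀ x : E, Lg x = ((1 : ℝ) / U) * ∑ u, Lf u x)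
    (Wstar : E) (hmin : ∀ x : E, Lg Wstar ≤ Lg x)
    (σ2 : ℝ)
    (hhet : ((1 : ℝ) / U) * ∑ u, ‖gradient (Lf u) Wstar‖ ^ 2 ≤ σ2)
    (N : ℕ)
    (W : E) (Wseq : Fin U → ℕ → E) :
    ((1 : ℝ) / U) * ∑ u, ∑ e ∈ Finset.range N, ‖gradient (Lf u) (Wseq u e)‖ ^ 2 ≤
      (3 * L ^ 2 / U) * ∑ u, ∑ e ∈ Finset.range N, ‖Wseq u e - W‖ ^ 2 +
        6 * N * L * (Lg W - Lg Wstar) + 3 * N * σ2 := by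
  have hgrad : ∀ u z, HasGradientAt (Lf u) (gradient (Lf u) z) z :=
    fun u z => (hdiff u z).hasGradientAt
  have hopt : ((1 : ℝ) / U) • ∑ u, gradient (Lf u) Wstar = 0 := by
    refine IsLocalMin.hasGradientAt_eq_zero (f := Lg) (Filter.Eventually.of_forall hmin) ?_
    rw [funext hLg]
    exact (HasGradientAt.sum _ fun u _ => hgrad u Wstar).const_mul _
  have hopt_inner : ((1 : ℝ) / U) * ∑ u, ⟪gradient (Lf u) Wstar, W - Wstar⟫ = 0 := by
    simpa [real_inner_smul_left, sum_inner] using congrArg (⟪·, W - Wstar⟫) hopt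
  calc ((1 : ℝ) / U) * ∑ u, ∑ e ∈ Finset.range N, ‖gradient (Lf u) (Wseq u e)‖ ^ 2
      ≤ ((1 : ℝ) / U) * ∑ u, ∑ e ∈ Finset.range N, (3 * L ^ 2 * ‖Wseq u e - W‖ ^ 2 +
          6 * L * (Lf u W - Lf u Wstar - ⟪gradient (Lf u) Wstar, W - Wstar⟫) +
          3 * ‖gradient (Lf u) Wstar‖ ^ 2) := by
        gcongr with u _ e _
        exact (hconv u).sq_norm_le_of_lipschitz_gradient (hgrad u) hL (hsmooth u) _ W Wstar
    _ = (3 * L ^ 2 / U) * ∑ u, ∑ e ∈ Finset.range N, ‖Wseq u e - W‖ ^ 2 +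
          6 * N * L * (((1 : ℝ) / U) * ∑ u, Lf u W - ((1 : ℝ) / U) * ∑ u, Lf u Wstar -
            ((1 : ℝ) / U) * ∑ u, ⟪gradient (Lf u) Wstar, W - Wstar⟫) +
          3 * N * (((1 : ℝ) / U) * ∑ u, ‖gradient (Lf u) Wstar‖ ^ 2) := by
        simp only [Finset.sum_add_distrib, Finset.sum_sub_distrib, ← Finset.mul_sum,
          Finset.sum_const, Finset.card_range, nsmul_eq_mul]
        ring
    _ ≤ _ := by
        rw [← hLg, ← hLg, hopt_inner, sub_zero]
        gcongr

/-- Bounding client aggregate gradients (per-step version): with differentiable, convex,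
`L`-smooth local objectives, global objective `Lg = (1/U) ∑ Lf u` with global minimizer
`Wstar`, heterogeneity bound `σ2` at the optimum, and `N` local GD steps with stepsize
`η > 0` from the common start `W`. -/
theorem client_aggregate_gradient_bound
    {E : Type*} [NormedAddCommGroup E] [InnerProductSpace ℝ E] [CompleteSpace E]
    (U : ℕ) (hU : 0 < U) (Lf : Fin U → E → ℝ) (L : ℝ) (hL : 0 < L)
    (hdiff : ∀ u, Differentiable ℝ (Lf u))
    (hconv : ∀ u, ConvexOn ℝ Set.univ (Lf u))
    (hsmooth : ∀ u, ∀ x y : E, ‖gradient (Lf u) x - gradient (Lf u) y‖ ≤ L * ‖x - y‖)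
    (Lg : E → ℝ) (hLg : ∀ x : E, Lg x = ((1 : ℝ) / U) * ∑ u, Lf u x)
    (Wstar : E) (hmin : ∀ x : E, Lg Wstar ≤ Lg x)
    (σ2 : ℝ) (hσ2 : 0 ≤ σ2)
    (hhet : ((1 : ℝ) / U) * ∑ u, ‖gradient (Lf u) Wstar‖ ^ 2 ≤ σ2)
    (η : ℝ) (hη0 : 0 < η)
    (N : ℕ) (hN : 1 ≤ N)
    (W : E) (Wseq : Fin U → ℕ → E)
    (hW0 : ∀ u, Wseq u 0 = W)
    (hstep : ∀ u e, Wseq u (e + 1) = Wseq u e - η • gradient (Lf u) (Wseq u e)) :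
    ((1 : ℝ) / U) * ∑ u, ∑ e ∈ Finset.range N, ‖gradient (Lf u) (Wseq u e)‖ ^ 2 ≤
      (3 * L ^ 2 / U) * ∑ u, ∑ e ∈ Finset.range N, ‖Wseq u e - W‖ ^ 2 +
        6 * N * L * (Lg W - Lg Wstar) + 3 * N * σ2 :=
  client_aggregate_gradient_bound_general U Lf L hL hdiff hconv hsmooth Lg hLg Wstar hmin σ2 hhet N
    W Wseq
end
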